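/- Complex τ manipulation attack: Let P = Σ_{j∈V_R, j≠i} W_{ij}(x_i + Clip(x_j − x_i, τ_i)) denote the self-centered clipped aggregate of user i's honest neighbors (excluding i itself), and C = Σ_{j∈V_R} W_{ij} Clip(x_j − x_i, τ_i). Suppose every Byzantine user b ∈ V_B sends to user i the vector x_b = x_i − (P + C) / W_B, where W_B = Σ_{b∈V_B} W_{ib} > 0. If ‖(P + C) / W_B‖ ≤ τ_i, then the aggregated update satisfies SCClip_i(x_1, …, x_n; τ_i) = x_i − P; i.e., user i's state is pushed in the direction opposite to the honest aggregate. -/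
import Mathlib


open Finset

/-- Norm clipping: `Clip z τ = min 1 (τ/‖z‖) • z` (with `Clip 0 τ = 0`).
Note `Clip z τ = z` whenever `‖z‖ ≤ τ`. -/
noncomputable def Clip {d : ℕ} (z : EuclideanSpace ℝ (Fin d)) (τ : ℝ) :
    EuclideanSpace ℝ (Fin d) :=
  (min 1 (τ / ‖z‖)) • z

/-- Self-centered clipping aggregation of user `i` (own vector `xi`) over
the user set `V` with weights `W` and radius `τ`:
`SCClip_i(x₁,…,xₙ; τ) = ∑_{j∈V} W_{ij} (x_i + Clip(x_j − x_i, τ))`. -/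
noncomputable def SCClip {ι : Type*} {d : ℕ} (V : Finset ι) (W : ι → ℝ)
    (xi : EuclideanSpace ℝ (Fin d)) (x : ι → EuclideanSpace ℝ (Fin d)) (τ : ℝ) :
    EuclideanSpace ℝ (Fin d) :=
  ∑ j ∈ V, W j • (xi + Clip (x j - xi) τ)

lemma Clip_eq_self {d : ℕ} {z : EuclideanSpace ℝ (Fin d)} {τ : ℝ} (h : ‖z‖ ≤ τ) :
    Clip z τ = z := by
  unfold Clip
  rcases eq_or_ne z 0 with h0 | h0
  · simp [h0]
  · rw [min_eq_left ((one_le_div (norm_pos_iff.mpr h0)).mpr h), one_smul]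

/-- Complex τ manipulation attack: user `i` is pushed opposite to the honest
self-centered clipped aggregate `P` of its honest neighbors (excluding itself). -/
theorem complex_tau_manipulation {ι : Type*} [DecidableEq ι] {d : ℕ} (V VR : Finset ι) (hVR : VR ⊆ V)
    (W : ι → ℝ) (hW0 : ∀ j ∈ V, 0 ≤ W j) (hW1 : ∑ j ∈ V, W j = 1)
    (i : ι) (hi : i ∈ VR) (τ : ℝ) (hτ : 0 ≤ τ)
    (x : ι → EuclideanSpace ℝ (Fin d))
    (P : EuclideanSpace ℝ (Fin d))
    (hP : P = ∑ j ∈ VR.erase i, W j • (x i + Clip (x j - x i) τ))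
    (C : EuclideanSpace ℝ (Fin d)) (hC : C = ∑ j ∈ VR, W j • Clip (x j - x i) τ)
    (WB : ℝ) (hWB : WB = ∑ b ∈ V \ VR, W b) (hWBpos : 0 < WB)
    (hsend : ∀ b ∈ V \ VR, x b = x i - WB⁻¹ • (P + C))
    (hnoclipB : ‖WB⁻¹ • (P + C)‖ ≤ τ) :
    SCClip V W (x i) x τ = x i - P := by
  set v : EuclideanSpace ℝ (Fin d) := WB⁻¹ • (P + C) with hv
  have hclip : ∀ b ∈ V \ VR, Clip (x b - x i) τ = -v := by
    intro b hb
    rw [hsend b hb, sub_sub_cancel_left]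
    exact Clip_eq_self (by rwa [norm_neg])
  have hsplit : SCClip V W (x i) x τ =
      (∑ b ∈ V \ VR, W b • (x i + Clip (x b - x i) τ)) +
      (∑ j ∈ VR, W j • (x i + Clip (x j - x i) τ)) := by
    rw [SCClip, Finset.sum_sdiff hVR]
  have hB : (∑ b ∈ V \ VR, W b • (x i + Clip (x b - x i) τ)) = WB • (x i - v) := by
    rw [hWB, Finset.sum_smul]
    refine Finset.sum_congr rfl fun b hb => ?_
    rw [hclip b hb, ← sub_eq_add_neg]
  have hWBv : WB • v = P + C := by
    rw [hv, smul_smul, mul_inv_cancel₀ (ne_of_gt hWBpos), one_smul]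
  have hR : (∑ j ∈ VR, W j • (x i + Clip (x j - x i) τ)) =
      (∑ j ∈ VR, W j) • x i + C := by
    simp only [hC, smul_add, Finset.sum_add_distrib, Finset.sum_smul]
  have hsum : WB + (∑ j ∈ VR, W j) = 1 := by
    rw [hWB, ← hW1, Finset.sum_sdiff hVR]
  have hs : (∑ j ∈ VR, W j) = 1 - WB := by linarith
  rw [hsplit, hB, hR, smul_sub, hWBv, hs]
  module
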